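/- In the shuffle algebra, for n ≥ 2: ∑_{r, s ≥ 1, r + s = n} z_r ш z_s = ∑_{t1, t2 ≥ 1, t1 + t2 = n} 2^{t1} z_{t1, t2}, where ш is the transported shuffle product. -/

import Mathlib

open Finsupp

/-- The free ℤ-module on words in the two letters `x₀, x₁`
(`false` plays the role of `x₀` and `true` the role of `x₁`). -/
abbrev XWords : Type := (List Bool) →₀ ℤ

/-- The free ℤ-module on words `z_{s₁,…,s_k}` (a word is the list of its indices). -/
abbrev QWords : Type := (List ℕ) →₀ ℤ

/-- A word in `x₀, x₁` as a basis element. -/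
noncomputable def xw (l : List Bool) : XWords := Finsupp.single l 1

/-- The word `z_{s₁,…,s_k}` as a basis element. -/
noncomputable def zw (l : List ℕ) : QWords := Finsupp.single l 1

/-- The bijection `z_{s₁,…,s_k} ↔ x₀^{s₁-1} x₁ ⋯ x₀^{s_k-1} x₁` on words. -/
def encodeWord : List ℕ → List Bool
  | [] => []
  | s :: t => List.replicate (s - 1) false ++ true :: encodeWord t

/-!
Under the encoding, `z_r ш z_s` is the shuffle of `x₀^{r-1} x₁` with `x₀^{s-1} x₁`, and every
term has the form `x₀^p x₁ x₀^q x₁` with `p + q = r + s - 2`. When the first `x₁` comes from the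
left factor, the leading `p` letters `x₀` contain all `r - 1` of that factor, in `C(p, r-1)`
ways; symmetrically for the right factor. Summing over `r + s = n`, the word `x₀^p x₁ x₀^q x₁`
collects `∑_i (C(p, i) + C(p, n-2-i)) = 2^{p+1}`. The encoding is injective on words with
positive indices, so the identity transfers back to `z`-words.
-/

open Finset

theorem encodeWord_one_cons (l : List ℕ) : encodeWord (1 :: l) = true :: encodeWord l := rfl

theorem encodeWord_add_two_cons (s : ℕ) (l : List ℕ) :
    encodeWord ((s + 2) :: l) = false :: encodeWord ((s + 1) :: l) := rfl

theorem replicate_false_append_true_cons_inj {a b : ℕ} {u v : List Bool}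
    (h : List.replicate a false ++ true :: u = List.replicate b false ++ true :: v) :
    a = b ∧ u = v := by
  induction a generalizing b with
  | zero => cases b <;> simp_all [List.replicate_succ]
  | succ a ih =>
    cases b with
    | zero => simp [List.replicate_succ] at h
    | succ b =>
      simp only [List.replicate_succ, List.cons_append, List.cons.injEq, true_and] at h
      simpa using ih h

theorem encodeWord_injOn : Set.InjOn encodeWord {l | ∀ x ∈ l, 1 ≤ x} := by
  intro u hu v hv h
  induction u generalizing v with
  | nil => cases v <;> simp_all [encodeWord]
  | cons s u ih =>
    cases v with
    | nil => simp [encodeWord] at h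
    | cons t v =>
      simp only [Set.mem_ofPred_eq, List.mem_cons, forall_eq_or_imp] at hu hv
      obtain ⟨hst, huv⟩ := replicate_false_append_true_cons_inj h
      rw [ih hu.2 hv.2 huv]
      congr 1
      omega

theorem mapDomain_cons_xw (c : Bool) (l : List Bool) :
    mapDomain (List.cons c) (xw l) = xw (c :: l) :=
  mapDomain_single

theorem mapDomain_encodeWord_zw (l : List ℕ) : mapDomain encodeWord (zw l) = xw (encodeWord l) :=
  mapDomain_single

theorem choose_succ_succ_of_le {p b : ℕ} (h : p ≤ b) : (p + 1).choose (b + 1) = p.choose b := by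
  rw [Nat.choose_succ_succ', Nat.choose_eq_zero_of_lt (by omega : p < b + 1), add_zero]

theorem sum_antidiagonal_choose_fst {p m : ℕ} (h : p ≤ m) :
    ∑ ij ∈ antidiagonal m, p.choose ij.1 = 2 ^ p := by
  rw [Nat.sum_antidiagonal_eq_sum_range_succ_mk, ← Nat.sum_range_choose]
  refine (sum_subset (range_subset_range.2 (by omega)) fun k _ hk => ?_).symm
  exact Nat.choose_eq_zero_of_lt (by simpa using hk)

theorem sum_antidiagonal_choose_add {p m : ℕ} (h : p ≤ m) :
    ∑ ij ∈ antidiagonal m, (p.choose ij.1 + p.choose ij.2) = 2 ^ (p + 1) := by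
  rw [sum_add_distrib, ← Nat.sum_antidiagonal_swap (f := fun ij => p.choose ij.2)]
  simp only [Prod.snd_swap, sum_antidiagonal_choose_fst h, pow_succ, mul_two]

theorem sum_filter_antidiagonal_pos {M : Type*} [AddCommMonoid M] (m : ℕ) (f : ℕ × ℕ → M) :
    ∑ p ∈ (antidiagonal (m + 2)).filter (fun p => 1 ≤ p.1 ∧ 1 ≤ p.2), f p =
      ∑ ij ∈ antidiagonal m, f (ij.1 + 1, ij.2 + 1) := by
  rw [sum_filter, Nat.sum_antidiagonal_succ, Nat.sum_antidiagonal_succ']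
  simp

structure IsShuffleProduct (sh : XWords →ₗ[ℤ] XWords →ₗ[ℤ] XWords) : Prop where
  nil_left : ∀ w : XWords, sh (xw []) w = w
  nil_right : ∀ w : XWords, sh w (xw []) = w
  cons_cons : ∀ (a b : Bool) (u v : List Bool),
    sh (xw (a :: u)) (xw (b :: v)) =
      mapDomain (List.cons a) (sh (xw u) (xw (b :: v))) +
        mapDomain (List.cons b) (sh (xw (a :: u)) (xw v))

namespace IsShuffleProduct

variable {sh : XWords →ₗ[ℤ] XWords →ₗ[ℤ] XWords}

theorem comm (hsh : IsShuffleProduct sh) (u v : List Bool) :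
    sh (xw u) (xw v) = sh (xw v) (xw u) := by
  induction u generalizing v with
  | nil => rw [hsh.nil_left, hsh.nil_right]
  | cons a u ihu =>
    induction v with
    | nil => rw [hsh.nil_left, hsh.nil_right]
    | cons b v ihv => rw [hsh.cons_cons, hsh.cons_cons, ihu, ihv, add_comm]

theorem depthOne_zero_shuffle_depthOne (hsh : IsShuffleProduct sh) (b : ℕ) :
    sh (xw (encodeWord [1])) (xw (encodeWord [b + 1])) =
      ∑ pq ∈ antidiagonal b,
        ((pq.1.choose 0 + pq.1.choose b : ℕ) : ℤ) • xw (encodeWord [pq.1 + 1, pq.2 + 1]) := by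
  change sh (xw [true]) _ = _
  induction b with
  | zero =>
    have := hsh.cons_cons true true [] []
    simp only [hsh.nil_left, hsh.nil_right, mapDomain_cons_xw] at this
    simp [encodeWord, this, two_smul]
  | succ b ih =>
    rw [encodeWord_add_two_cons, hsh.cons_cons, hsh.nil_left, ih, Nat.sum_antidiagonal_succ,
      mapDomain_finsetSum]
    simp only [mapDomain_smul, mapDomain_cons_xw, ← encodeWord_add_two_cons, ← encodeWord_one_cons]
    congr 1
    · simp
    · refine sum_congr rfl fun pq hpq => ?_
      rw [choose_succ_succ_of_le (HasAntidiagonal.antidiagonal.fst_le hpq), Nat.choose_zero_right,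
        Nat.choose_zero_right]

theorem depthOne_shuffle_depthOne (hsh : IsShuffleProduct sh) (a b : ℕ) :
    sh (xw (encodeWord [a + 1])) (xw (encodeWord [b + 1])) =
      ∑ pq ∈ antidiagonal (a + b),
        ((pq.1.choose a + pq.1.choose b : ℕ) : ℤ) • xw (encodeWord [pq.1 + 1, pq.2 + 1]) := by
  induction a generalizing b with
  | zero => simpa using hsh.depthOne_zero_shuffle_depthOne b
  | succ a iha =>
    induction b with
    | zero =>
      rw [hsh.comm]
      simpa [add_comm] using hsh.depthOne_zero_shuffle_depthOne (a + 1)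
    | succ b ihb =>
      rw [encodeWord_add_two_cons, encodeWord_add_two_cons, hsh.cons_cons,
        ← encodeWord_add_two_cons, ← encodeWord_add_two_cons, iha, ihb,
        show a + 1 + b = a + (b + 1) by omega, show a + 1 + (b + 1) = a + (b + 1) + 1 by omega,
        Nat.sum_antidiagonal_succ, mapDomain_finsetSum, mapDomain_finsetSum, ← sum_add_distrib]
      simp only [mapDomain_smul, mapDomain_cons_xw, ← encodeWord_add_two_cons,
        Nat.choose_zero_succ, add_zero, Nat.cast_zero, zero_smul, zero_add]
      refine sum_congr rfl fun pq _ => ?_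
      rw [← add_smul, Nat.choose_succ_succ', Nat.choose_succ_succ']
      congr 1
      push_cast
      ring

theorem sum_depthOne_shuffle_depthOne (hsh : IsShuffleProduct sh) (m : ℕ) :
    ∑ ij ∈ antidiagonal m, sh (xw (encodeWord [ij.1 + 1])) (xw (encodeWord [ij.2 + 1])) =
      ∑ pq ∈ antidiagonal m, (2 : ℤ) ^ (pq.1 + 1) • xw (encodeWord [pq.1 + 1, pq.2 + 1]) := by
  calc _ = ∑ ij ∈ antidiagonal m, ∑ pq ∈ antidiagonal m,
        ((pq.1.choose ij.1 + pq.1.choose ij.2 : ℕ) : ℤ) • xw (encodeWord [pq.1 + 1, pq.2 + 1]) :=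
        sum_congr rfl fun ij hij => by
          rw [hsh.depthOne_shuffle_depthOne, mem_antidiagonal.1 hij]
    _ = ∑ pq ∈ antidiagonal m, ((∑ ij ∈ antidiagonal m,
          (pq.1.choose ij.1 + pq.1.choose ij.2) : ℕ) : ℤ) •
            xw (encodeWord [pq.1 + 1, pq.2 + 1]) := by
        rw [Finset.sum_comm]
        simp only [Nat.cast_sum, sum_smul]
    _ = _ := sum_congr rfl fun pq hpq => by
        rw [sum_antidiagonal_choose_add (HasAntidiagonal.antidiagonal.fst_le hpq)]
        push_cast
        rfl

end IsShuffleProduct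

/-- For `n ≥ 2`:
`∑_{r+s=n, r,s ≥ 1} z_r ш z_s = ∑_{t₁+t₂=n, t₁,t₂ ≥ 1} 2^{t₁} z_{t₁,t₂}`,
where `ш` is the shuffle product transported to `z`-words. -/
theorem shuffle_sum_depth_two
    (sh : XWords →ₗ[ℤ] XWords →ₗ[ℤ] XWords)
    (hsunitl : ∀ w : XWords, sh (xw []) w = w)
    (hsunitr : ∀ w : XWords, sh w (xw []) = w)
    (hsrec : ∀ (a b : Bool) (u v : List Bool),
      sh (xw (a :: u)) (xw (b :: v)) =
        Finsupp.mapDomain (List.cons a) (sh (xw u) (xw (b :: v))) +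
          Finsupp.mapDomain (List.cons b) (sh (xw (a :: u)) (xw v)))
    (msh : QWords →ₗ[ℤ] QWords →ₗ[ℤ] QWords)
    (hsupp : ∀ u v : List ℕ, (∀ x ∈ u, 1 ≤ x) → (∀ x ∈ v, 1 ≤ x) →
      ∀ l ∈ (msh (zw u) (zw v)).support, ∀ x ∈ l, 1 ≤ x)
    (hcompat : ∀ u v : List ℕ, (∀ x ∈ u, 1 ≤ x) → (∀ x ∈ v, 1 ≤ x) →
      Finsupp.mapDomain encodeWord (msh (zw u) (zw v)) =
        sh (xw (encodeWord u)) (xw (encodeWord v)))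
    (n : ℕ) (hn : 2 ≤ n) :
    ∑ p ∈ (Finset.HasAntidiagonal.antidiagonal n).filter (fun p => 1 ≤ p.1 ∧ 1 ≤ p.2),
        msh (zw [p.1]) (zw [p.2])
      = ∑ p ∈ (Finset.HasAntidiagonal.antidiagonal n).filter (fun p => 1 ≤ p.1 ∧ 1 ≤ p.2),
          ((2 : ℤ) ^ p.1) • zw [p.1, p.2] := by
  obtain ⟨m, rfl⟩ : ∃ m, n = m + 2 := ⟨n - 2, by omega⟩
  have hsh : IsShuffleProduct sh := ⟨hsunitl, hsunitr, hsrec⟩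
  have hpos (i : ℕ) : ∀ x ∈ [i + 1], 1 ≤ x := by simp
  rw [sum_filter_antidiagonal_pos, sum_filter_antidiagonal_pos]
  refine mapDomain_injOn _ encodeWord_injOn ?_ ?_ ?_
  · exact Submodule.sum_mem (supported ℤ ℤ _) fun ij _ =>
      (mem_supported ℤ _).2 fun l hl => hsupp _ _ (hpos ij.1) (hpos ij.2) l hl
  · exact Submodule.sum_mem (supported ℤ ℤ _) fun ij _ =>
      Submodule.smul_mem _ _ (single_mem_supported ℤ _ (by simp))
  · have hcompat_depthOne (i j : ℕ) := hcompat [i + 1] [j + 1] (hpos i) (hpos j)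
    simp only [mapDomain_finsetSum, mapDomain_smul, hcompat_depthOne, mapDomain_encodeWord_zw]
    exact hsh.sum_depthOne_shuffle_depthOne m
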